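/- arXiv:1601.04311 — 7 statements merged into one kernel-verified Lean document; each statement's English description precedes it below -/
import Mathlib

section
/- Let G be a finite group, α an automorphism of G, and e an integer. Then the number of elements g ∈ G with α(g) = g^e is at most k(G)·|fix(α)|, where k(G) is the number of conjugacy classes of G and fix(α) is the subgroup of fixed points of α. -/
/-!
Fix a conjugacy class meeting `P_e(α)`, say at `g`. Since `α g = g ^ e`, a conjugate `x g x⁻¹`
lies in `P_e(α)` exactly when the twisted commutator `x⁻¹ α(x)` centralizes `α g`, and the fibres
of `x ↦ x⁻¹ α(x)` are cosets of `fix(α)`. Counting the `x` with `x g x⁻¹ ∈ P_e(α)` in two ways gives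
`|C(g)| · |P_e(α) ∩ gᴳ| ≤ |C(α g)| · |fix(α)|`, and `|C(α g)| = |C(g)|`, so every conjugacy class
contributes at most `|fix(α)|` elements of `P_e(α)`.
-/

open Finset

theorem card_centralizer_mul_card_filter_isConj_le {G : Type*} [Group G] [Fintype G]
    [DecidableEq G] (S : Finset G) (g : G) :
    Nat.card (Subgroup.centralizer {g}) * #{h ∈ S | IsConj g h} ≤ #{x | x * g * x⁻¹ ∈ S} := by
  refine mul_card_image_le_card_of_maps_to (f := fun x => x * g * x⁻¹)
    (fun x hx => ?_) _ fun h hh => ?_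
  · simp only [mem_filter, mem_univ, true_and] at hx ⊢
    exact ⟨hx, isConj_iff.mpr ⟨x, rfl⟩⟩
  · obtain ⟨hS, x₀, rfl⟩ := by simpa [isConj_iff] using hh
    rw [← Nat.card_eq_finsetCard]
    refine Nat.card_le_card_of_injective (fun c => ⟨x₀ * c, ?_⟩)
      fun c d hcd => Subtype.ext (mul_left_cancel (congrArg Subtype.val hcd))
    have hc : (c : G) * g = g * c := Subgroup.mem_centralizer_singleton_iff.mp c.2
    have : x₀ * c * g * (x₀ * c)⁻¹ = x₀ * g * x₀⁻¹ := by
      rw [mul_assoc x₀, hc]; group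
    simp only [mem_filter, mem_univ, true_and]
    rw [this]
    exact ⟨hS, rfl⟩

namespace MulEquiv

variable {G : Type*} [Group G] (α : G ≃* G)

theorem apply_conj_eq_zpow_iff_commute {g : G} {e : ℤ} (hg : α g = g ^ e) (x : G) :
    α (x * g * x⁻¹) = (x * g * x⁻¹) ^ e ↔ Commute (x⁻¹ * α x) (α g) := by
  rw [map_mul, map_mul, map_inv, conj_zpow, ← hg, Commute, SemiconjBy,
    ← (mul_left_injective (α x)).eq_iff, ← (mul_right_injective x⁻¹).eq_iff]
  simp only [mul_assoc, inv_mul_cancel, mul_one, inv_mul_cancel_left]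

theorem card_centralizer_apply (g : G) :
    Nat.card (Subgroup.centralizer {α g}) = Nat.card (Subgroup.centralizer {g}) :=
  Nat.card_congr <| (α.toEquiv.subtypeEquiv fun x => by
    show x ∈ _ ↔ α x ∈ _
    simp only [Subgroup.mem_centralizer_singleton_iff]
    rw [← map_mul, ← map_mul, α.injective.eq_iff]).symm

variable [Fintype G] [DecidableEq G]

theorem card_filter_inv_mul_apply_eq_le (c : G) :
    #{x | x⁻¹ * α x = c} ≤ #{x | α x = x} := by
  obtain hempty | ⟨x₀, hx₀⟩ := ({x | x⁻¹ * α x = c} : Finset G).eq_empty_or_nonempty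
  · simp [hempty]
  · have twist : ∀ {x}, x⁻¹ * α x = c ↔ α x = x * c := by
      intro x; rw [inv_mul_eq_iff_eq_mul]
    refine card_le_card_of_injOn (· * x₀⁻¹) (fun x hx => ?_) (mul_left_injective _).injOn
    simp only [coe_filter, mem_filter, mem_univ, true_and, Set.mem_ofPred_eq] at hx hx₀ ⊢
    rw [map_mul, map_inv, twist.mp hx, twist.mp hx₀]
    group

theorem card_filter_inv_mul_apply_mem_le (H : Subgroup G) [DecidablePred (· ∈ H)] :
    #{x | x⁻¹ * α x ∈ H} ≤ #{x | α x = x} * Nat.card H := by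
  rw [Nat.card_eq_fintype_card, Fintype.card_subtype]
  refine card_le_mul_card_image_of_maps_to (f := fun x => x⁻¹ * α x)
    (fun x hx => by simpa using hx) _ fun c _ => ?_
  rw [filter_filter]
  exact (card_le_card (monotone_filter_right _ fun x _ => And.right)).trans
    (α.card_filter_inv_mul_apply_eq_le c)

theorem card_filter_apply_eq_zpow_isConj_le {g : G} {e : ℤ} (hg : α g = g ^ e) :
    #{h | α h = h ^ e ∧ IsConj g h} ≤ #{x | α x = x} := by
  classical
  have conj_count := card_centralizer_mul_card_filter_isConj_le {h | α h = h ^ e} g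
  rw [filter_filter] at conj_count
  have twisted_count := α.card_filter_inv_mul_apply_mem_le (Subgroup.centralizer {α g})
  rw [α.card_centralizer_apply] at twisted_count
  refine Nat.le_of_mul_le_mul_left ?_ (Nat.card_pos : 0 < Nat.card (Subgroup.centralizer {g}))
  calc Nat.card (Subgroup.centralizer {g}) * #{h | α h = h ^ e ∧ IsConj g h}
      ≤ #{x | x * g * x⁻¹ ∈ ({h | α h = h ^ e} : Finset G)} := conj_count
    _ ≤ #{x | x⁻¹ * α x ∈ Subgroup.centralizer {α g}} := card_le_card fun x hx => by
      simp only [mem_filter, mem_univ, true_and, α.apply_conj_eq_zpow_iff_commute hg] at hx ⊢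
      exact Subgroup.mem_centralizer_singleton_iff.mpr hx.eq
    _ ≤ #{x | α x = x} * Nat.card (Subgroup.centralizer {g}) := twisted_count
    _ = _ := mul_comm _ _

end MulEquiv

/-- The number of elements `g` with `α g = g ^ e` is at most the number of conjugacy
classes of `G` times the number of fixed points of `α`. -/
theorem stmt_1 {G : Type*} [Group G] [Finite G] (α : G ≃* G) (e : ℤ) :
    Nat.card {g : G | α g = g ^ e} ≤
      Nat.card (ConjClasses G) * Nat.card {g : G | α g = g} := by
  classical
  have := Fintype.ofFinite G
  simp only [Set.coe_ofPred, Nat.card_eq_fintype_card, Fintype.card_subtype]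
  calc #{g | α g = g ^ e}
      ≤ #{x | α x = x} * #(({g | α g = g ^ e} : Finset G).image ConjClasses.mk) := by
        refine card_le_mul_card_image _ _ fun K hK => ?_
        obtain ⟨g, hg, rfl⟩ := mem_image.mp hK
        rw [filter_filter]
        convert α.card_filter_apply_eq_zpow_isConj_le (mem_filter.mp hg).2 using 4
        rw [ConjClasses.mk_eq_mk_iff_isConj, isConj_comm]
    _ ≤ #{x | α x = x} * Fintype.card (ConjClasses G) := Nat.mul_le_mul_left _ (card_le_univ _)
    _ = _ := mul_comm _ _
end

section
/- Let G be a finite group, N a characteristic subgroup of G, α an automorphism of G, and α̃ the induced automorphism of G/N. Then L₂(α) ≤ [N : fix(α|_N)] · L₂(α̃), where L₂(β) denotes the number of elements x squared by β (i.e., with β(x) = x²) and fix(α|_N) is the group of fixed points of α restricted to N. -/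
/-!
If `α x = x ^ 2`, `α y = y ^ 2` and `α` fixes `x⁻¹ * y`, then `x⁻¹ ^ 2 * y ^ 2 = x⁻¹ * y`,
which cancels to `x = y`. Hence the elements squared by `α` lie in pairwise distinct left
cosets of `fix(α) ∩ N`. Such a coset maps to an element of `G ⧸ N` squared by `α̃`, and each
coset of `N` splits into `[N : fix(α) ∩ N]` cosets of `fix(α) ∩ N`.
-/

theorem MonoidHom.eq_of_map_eq_sq_of_map_inv_mul {G : Type*} [Group G] (φ : G →* G) {x y : G}
    (hx : φ x = x ^ 2) (hy : φ y = y ^ 2) (hxy : φ (x⁻¹ * y) = x⁻¹ * y) : x = y := by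
  rw [map_mul, map_inv, hx, hy] at hxy
  have h := congrArg (fun g => x * g * y⁻¹) hxy
  exact inv_mul_eq_one.mp (by simpa [pow_two, mul_assoc] using h)

theorem MonoidHom.injOn_mk_setOf_map_eq_sq {G : Type*} [Group G] (φ : G →* G)
    {H : Subgroup G} (hH : ∀ h ∈ H, φ h = h) :
    {x : G | φ x = x ^ 2}.InjOn (QuotientGroup.mk : G → G ⧸ H) := fun _ hx _ hy hxy =>
  φ.eq_of_map_eq_sq_of_map_inv_mul hx hy (hH _ (QuotientGroup.eq.mp hxy))

theorem Subgroup.card_le_relIndex_mul_card {G : Type*} [Group G] [Finite G] {H K : Subgroup G}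
    {S : Set G} {T : Set (G ⧸ K)} (hinj : S.InjOn (QuotientGroup.mk : G → G ⧸ (H ⊓ K)))
    (hmaps : S.MapsTo QuotientGroup.mk T) :
    Nat.card S ≤ H.relIndex K * Nat.card T := by
  let e := Subgroup.quotientEquivProdOfLE (inf_le_right : H ⊓ K ≤ K)
  let f : S → T × (K ⧸ (H ⊓ K).subgroupOf K) := fun x =>
    (⟨QuotientGroup.mk x, hmaps x.2⟩, (e (QuotientGroup.mk x)).2)
  have hf : Function.Injective f := by
    rintro ⟨x, hx⟩ ⟨y, hy⟩ hxy
    have h1 : (e x).1 = (e y).1 := congrArg (Subtype.val ∘ Prod.fst) hxy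
    have h2 : (e x).2 = (e y).2 := congrArg (·.2) hxy
    have he : e x = e y := Prod.ext h1 h2
    exact Subtype.ext (hinj hx hy (e.injective he))
  calc Nat.card S ≤ Nat.card (T × (K ⧸ (H ⊓ K).subgroupOf K)) :=
        Nat.card_le_card_of_injective f hf
    _ = H.relIndex K * Nat.card T := by
        rw [Nat.card_prod, mul_comm, ← Subgroup.inf_relIndex_right]
        rfl

/-- If `α̃` is the automorphism of `G ⧸ N` induced by `α` (N characteristic), then the
number of elements squared by `α` is at most `[N : fix(α|_N)]` times the number of
elements of `G ⧸ N` squared by `α̃`. -/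
theorem stmt_4 {G : Type*} [Group G] [Finite G] (N : Subgroup G) [N.Characteristic]
    (α : G ≃* G) (αbar : (G ⧸ N) ≃* (G ⧸ N))
    (hbar : ∀ g : G, αbar (g : G ⧸ N) = ((α g : G) : G ⧸ N)) :
    Nat.card {x : G | α x = x ^ 2} ≤
      ((α.toMonoidHom.eqLocus (MonoidHom.id G)).relIndex N) *
        Nat.card {y : G ⧸ N | αbar y = y ^ 2} := by
  refine Subgroup.card_le_relIndex_mul_card
    (α.toMonoidHom.injOn_mk_setOf_map_eq_sq fun h hh => hh.1) fun x hx => ?_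
  change αbar x = (x : G ⧸ N) ^ 2
  rw [hbar, hx, QuotientGroup.mk_pow]
end

section
/- Let G be a finite group, N a characteristic subgroup, α an automorphism of G with induced automorphism α̃ of G/N. Then L₃(α) ≤ [N : fix(α|_N)] · L₋₁(N) · L₃(α̃), where L₃(β) is the number of elements cubed by β, L₋₁(N) is the maximum over automorphisms γ of N of the number of elements of N inverted by γ, and fix(α|_N) is the fixed-point subgroup of α restricted to N. -/
/-!
Elements cubed by `α` map to elements of `G ⧸ N` cubed by `α̃`, so it suffices to bound the
elements `x n` (`n ∈ N`) cubed by `α` over a single coset `x N`. Sort such `n` by their class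
in `N ⧸ fix(α|_N)`. If `y := x n₀` and `y m` are both cubed with `α m = m`, then
`y³ m = (y m)³`, i.e. `m y m = y`, so conjugation by `y` inverts `m`: each class injects into
the set of elements of `N` inverted by one automorphism of `N`.
-/

theorem Nat.card_le_card_mul_of_card_fiber_le {A B : Type*} [Finite A] [Finite B] (f : A → B)
    {M : ℕ} (h : ∀ a, Nat.card {a' // f a' = f a} ≤ M) : Nat.card A ≤ Nat.card B * M := by
  have := Fintype.ofFinite B
  have fiber_le (b : B) : Nat.card {a // f a = b} ≤ M := by
    rcases isEmpty_or_nonempty {a // f a = b} with _ | ⟨a, rfl⟩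
    · simp
    · exact h a
  calc Nat.card A = ∑ b, Nat.card {a // f a = b} := by
        rw [← Nat.card_sigma, Nat.card_congr (Equiv.sigmaFiberEquiv f)]
    _ ≤ ∑ _b : B, M := Finset.sum_le_sum fun b _ => fiber_le b
    _ = Nat.card B * M := by simp [Nat.card_eq_fintype_card]

theorem inv_mul_mul_eq_inv_of_pow_three_mul_eq {G : Type*} [Group G] {x m : G}
    (h : x ^ 3 * m = (x * m) ^ 3) : x⁻¹ * m * x = m⁻¹ := by
  have h' : x * x * x * m = x * (m * x * m) * x * m := by
    simpa only [pow_succ, pow_zero, one_mul, mul_assoc] using h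
  have hmxm : x = m * x * m := mul_left_cancel (mul_right_cancel (mul_right_cancel h'))
  refine eq_inv_of_mul_eq_one_left ?_
  rw [mul_assoc _ x, mul_assoc x⁻¹, ← mul_assoc m, ← hmxm, inv_mul_cancel]

theorem card_inverted_le_iSup {H : Type*} [Group H] [Finite H] (γ : H ≃* H) :
    Nat.card {h : H | γ h = h⁻¹} ≤ ⨆ δ : H ≃* H, Nat.card {h : H | δ h = h⁻¹} :=
  le_ciSup (f := fun δ : H ≃* H => Nat.card {h : H | δ h = h⁻¹})
    ⟨Nat.card H, by
      rintro _ ⟨δ, rfl⟩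
      exact Nat.card_le_card_of_injective _ Subtype.val_injective⟩ γ

section

variable {G : Type*} [Group G] [Finite G] (N : Subgroup G) [N.Normal] (α : G ≃* G)

theorem card_mul_mem_cubed_le (x : G) :
    Nat.card {n : N // α (x * n) = (x * n) ^ 3} ≤
      (α.toMonoidHom.eqLocus (MonoidHom.id G)).relIndex N *
        ⨆ γ : N ≃* N, Nat.card {n : N | γ n = n⁻¹} := by
  refine Nat.card_le_card_mul_of_card_fiber_le
    (fun n => (n.1 : N ⧸ (α.toMonoidHom.eqLocus (MonoidHom.id G)).subgroupOf N)) ?_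
  rintro ⟨n₀, hn₀⟩
  let γ : N ≃* N := MulAut.conjNormal (x * n₀)⁻¹
  have inverted (n : N) (hn : α (x * n) = (x * n) ^ 3)
      (hfix : α (n₀⁻¹ * n : N) = (n₀⁻¹ * n : N)) :
      γ (n₀⁻¹ * n) = (n₀⁻¹ * n)⁻¹ := by
    ext
    simp only [γ, MulAut.conjNormal_apply, inv_inv]
    refine inv_mul_mul_eq_inv_of_pow_three_mul_eq ?_
    have hxn : x * n₀ * ↑(n₀⁻¹ * n) = x * n := by simp [mul_assoc]
    rw [hxn, ← hn, ← hn₀, ← hfix, ← map_mul, hxn]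
  refine (Nat.card_le_card_of_injective (β := {m : N | γ m = m⁻¹})
    (fun n => ⟨n₀⁻¹ * n.1.1, inverted n.1 n.1.2 (QuotientGroup.eq.mp n.2.symm)⟩)
    fun a b hab => ?_).trans (card_inverted_le_iSup γ)
  exact Subtype.ext (Subtype.ext (mul_left_cancel (congrArg Subtype.val hab)))

theorem card_cubed_fiber_le (x : {x : G | α x = x ^ 3}) :
    Nat.card {x' : {x : G | α x = x ^ 3} // (x'.1 : G ⧸ N) = x.1} ≤
      (α.toMonoidHom.eqLocus (MonoidHom.id G)).relIndex N *
        ⨆ γ : N ≃* N, Nat.card {n : N | γ n = n⁻¹} := by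
  refine (Nat.card_le_card_of_injective (β := {n : N // α (x * n) = (x * n) ^ 3})
    (fun x' => ⟨⟨x.1⁻¹ * x'.1.1, QuotientGroup.eq.mp x'.2.symm⟩,
      by simp only [mul_inv_cancel_left]; exact x'.1.2⟩)
    fun a b hab => ?_).trans (card_mul_mem_cubed_le N α x)
  exact Subtype.ext (Subtype.ext (mul_left_cancel (congrArg (fun n => n.1.1) hab)))

end

/-- If `α̃` is the automorphism of `G ⧸ N` induced by `α` (N characteristic), then
`L₃(α) ≤ [N : fix(α|_N)] · L₋₁(N) · L₃(α̃)`, where `L₋₁(N)` is the maximum number of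
elements of `N` inverted by an automorphism of `N`. -/
theorem stmt_6 {G : Type*} [Group G] [Finite G] (N : Subgroup G) [N.Characteristic]
    (α : G ≃* G) (αbar : (G ⧸ N) ≃* (G ⧸ N))
    (hbar : ∀ g : G, αbar (g : G ⧸ N) = ((α g : G) : G ⧸ N)) :
    Nat.card {x : G | α x = x ^ 3} ≤
      ((α.toMonoidHom.eqLocus (MonoidHom.id G)).relIndex N) *
        (⨆ γ : (↥N ≃* ↥N), Nat.card {n : ↥N | γ n = n⁻¹}) *
          Nat.card {y : G ⧸ N | αbar y = y ^ 3} := by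
  let π : {x : G | α x = x ^ 3} → {y : G ⧸ N | αbar y = y ^ 3} :=
    fun x => ⟨x.1, by rw [Set.mem_ofPred_eq, hbar, x.2.out, QuotientGroup.mk_pow]⟩
  rw [mul_comm]
  exact Nat.card_le_card_mul_of_card_fiber_le π fun x =>
    (Nat.card_congr (Equiv.subtypeEquivRight fun _ => Subtype.ext_iff)).le.trans
      (card_cubed_fiber_le N α x)
end

section
/- For every integer e, every finite group G and every characteristic subgroup N of G, we have L_e(G) ≤ |N| · L_e(G/N), where L_e(H) is the maximum over automorphisms α of H of the number of elements h ∈ H with α(h) = h^e. Equivalently, the relative function l_e(G) := L_e(G)/|G| is increasing on characteristic quotients. -/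
/-!
An automorphism `α` of `G` preserving `N` induces an automorphism `ᾱ` of `G ⧸ N`, and the
projection `G → G ⧸ N` maps the solutions of `α g = g ^ e` into the solutions of
`ᾱ y = y ^ e`. Each fibre of the projection is a coset of `N`, so at most `|N|` solutions
lie over each solution downstairs.
-/

open QuotientGroup

theorem Subgroup.card_le_card_mul_card_of_mapsTo {G : Type*} [Group G] [Finite G]
    (N : Subgroup G) {s : Set G} {t : Set (G ⧸ N)} (h : Set.MapsTo ((↑) : G → G ⧸ N) s t) :
    Nat.card s ≤ Nat.card N * Nat.card t :=
  card_preimage_mk N t ▸ Set.ncard_le_ncard h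

theorem QuotientGroup.mapsTo_mk_setOf_apply_eq_zpow {G : Type*} [Group G] (N : Subgroup G)
    [N.Normal] (α : G ≃* G) (hα : N.map (α : G →* G) = N) (e : ℤ) :
    Set.MapsTo ((↑) : G → G ⧸ N) {g | α g = g ^ e}
      {y | QuotientGroup.congr N N α hα y = y ^ e} := by
  intro g hg
  simp only [Set.mem_ofPred_eq, congr_mk] at hg ⊢
  rw [hg, QuotientGroup.mk_zpow]

/-- For every `e : ℤ`, finite `G` and characteristic `N ≤ G`,
`L_e(G) ≤ |N| · L_e(G ⧸ N)`, where `L_e(H)` is the maximum over automorphisms `α` of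
`H` of the number of `h ∈ H` with `α h = h ^ e`. -/
theorem stmt_11 {G : Type*} [Group G] [Finite G] (e : ℤ) (N : Subgroup G)
    [N.Characteristic] :
    (⨆ α : G ≃* G, Nat.card {g : G | α g = g ^ e}) ≤
      Nat.card N * ⨆ β : (G ⧸ N) ≃* (G ⧸ N), Nat.card {y : G ⧸ N | β y = y ^ e} := by
  refine ciSup_le fun α => ?_
  have hα : N.map (α : G →* G) = N := Subgroup.characteristic_iff_map_eq.mp ‹_› α
  calc Nat.card {g : G | α g = g ^ e}
      ≤ Nat.card N * Nat.card {y : G ⧸ N | congr N N α hα y = y ^ e} :=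
        N.card_le_card_mul_card_of_mapsTo (mapsTo_mk_setOf_apply_eq_zpow N α hα e)
    _ ≤ _ := Nat.mul_le_mul_left _ <|
        le_ciSup (f := fun β : (G ⧸ N) ≃* (G ⧸ N) => Nat.card {y | β y = y ^ e})
          (Set.finite_range _).bddAbove _
end

section
/- Let G be a finite group and suppose there exist automorphisms α, β of G such that the set S := {g ∈ G | α(g) = g·β(g)} has cardinality greater than (3/4)·|G|. Then G is abelian. -/
/-!
Write `S = {g | α g = g * β g}`. Expanding `α (g * x)` shows that if `g`, `x` and `g * x` lie in `S`,
then `β g` commutes with `x`. For fixed `x ∈ S`, the `g ∈ S` with `g * x ∈ S` form more than half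
of `G` because `|S| > 3|G|/4`, so by Lagrange the subgroup `β⁻¹(C(x))` is all of `G`, i.e. `x` is
central. Hence `S ⊆ Z(G)`, and Lagrange again gives `Z(G) = G`.
-/

theorem Set.ncard_add_ncard_le_ncard_inter_add_card {α : Type*} [Finite α] (s t : Set α) :
    s.ncard + t.ncard ≤ (s ∩ t).ncard + Nat.card α := by
  rw [← Set.ncard_inter_add_ncard_union s t]
  exact Nat.add_le_add_left (Set.ncard_le_card _) _

theorem Subgroup.eq_top_of_subset_of_card_lt_two_mul_ncard {G : Type*} [Group G] [Finite G]
    {H : Subgroup G} {s : Set G} (hs : s ⊆ H) (hcard : Nat.card G < 2 * s.ncard) : H = ⊤ := by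
  have hsH : s.ncard ≤ Nat.card H := by
    rw [← Nat.card_coe_set_eq]
    exact Set.ncard_le_ncard hs
  by_contra hH
  have hindex : 2 ≤ H.index := H.one_lt_index_of_ne_top hH
  have := H.card_mul_index
  nlinarith

section

variable {G : Type*} [Group G] {α β : G →* G}

theorem commute_of_mul_mem {g x : G} (hg : α g = g * β g) (hx : α x = x * β x)
    (hgx : α (g * x) = g * x * β (g * x)) : Commute (β g) x := by
  rw [map_mul, map_mul, hg, hx] at hgx
  have : g * (β g * x) * β x = g * (x * β g) * β x := by simpa only [mul_assoc] using hgx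
  exact mul_left_cancel (mul_right_cancel this)

theorem mem_center_of_card_lt [Finite G] (hβ : Function.Surjective β)
    (hS : 3 * Nat.card G < 4 * {g | α g = g * β g}.ncard) {x : G} (hx : α x = x * β x) :
    x ∈ Subgroup.center G := by
  set S : Set G := {g | α g = g * β g}
  have hshift : ((· * x) ⁻¹' S).ncard = S.ncard :=
    Set.ncard_preimage_of_injective_subset_range (mul_left_injective x)
      fun y _ => ⟨y * x⁻¹, inv_mul_cancel_right y x⟩
  have htop : (Subgroup.centralizer {x}).comap β = ⊤ := by
    refine Subgroup.eq_top_of_subset_of_card_lt_two_mul_ncard (s := S ∩ (· * x) ⁻¹' S) ?_ ?_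
    · rintro g ⟨hg, hgx⟩
      simpa [Subgroup.mem_centralizer_singleton_iff] using (commute_of_mul_mem hg hx hgx).eq
    · have := Set.ncard_add_ncard_le_ncard_inter_add_card S ((· * x) ⁻¹' S)
      omega
  rw [Subgroup.mem_center_iff]
  intro g
  obtain ⟨g, rfl⟩ := hβ g
  have hg : g ∈ (Subgroup.centralizer {x}).comap β := htop ▸ Subgroup.mem_top g
  exact Subgroup.mem_centralizer_singleton_iff.mp hg

end

/-- If automorphisms `α, β` of a finite group `G` satisfy `α g = g * β g` for more
than `3/4` of the elements `g` of `G`, then `G` is abelian. -/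
theorem stmt_14 {G : Type*} [Group G] [Finite G] (α β : G ≃* G)
    (h : (3 / 4 : ℚ) * Nat.card G < Nat.card {g : G | α g = g * β g}) :
    ∀ a b : G, a * b = b * a := by
  have hS : 3 * Nat.card G < 4 * {g | α.toMonoidHom g = g * β.toMonoidHom g}.ncard := by
    rw [← Nat.card_coe_set_eq]
    exact_mod_cast (by linarith : (3 * Nat.card G : ℚ) < 4 * Nat.card {g : G | α g = g * β g})
  have hcenter : Subgroup.center G = ⊤ :=
    Subgroup.eq_top_of_subset_of_card_lt_two_mul_ncard
      (s := {g | α.toMonoidHom g = g * β.toMonoidHom g})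
      (fun _ hx => mem_center_of_card_lt β.surjective hS hx) (by omega)
  intro a b
  exact (Subgroup.mem_center_iff.mp (hcenter ▸ Subgroup.mem_top a) b).symm
end

section
/- Let q = p^K be a prime power, let L be an integer with (3/4)K ≤ L < K, and let 0 < ε < 1/4. Let P(X) = P₁(X) + P₂(X) ∈ 𝔽_q[X] be nonzero with deg(P₁) ≤ q^{1/2+ε}, deg(P₂) ≤ q^{L/K} + q^{1/2+ε} − 1 < q, and every nonzero monomial of P₂ having degree at least p^L = q^{L/K}. Then P has at most q^{3/4+ε} roots in 𝔽_q. -/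
/-!
Put `c = p ^ (K - L)`. Since `x ↦ x ^ c` is additive on `F`, `P(x) ^ c = ∑ aᵢ ^ c x ^ (i c)`.
As `x ^ q = x` on `F`, every exponent `i c ≥ q` coming from `P₂` may be lowered by `q - 1`
without changing the function. The lowered exponents are `≡ 1 (mod p)` while the untouched ones
are `≡ 0`, so no two monomials merge: the result is a nonzero polynomial vanishing at every root
of `P`, of degree at most `max (deg P₁ · c) (deg P₂ · c - (q - 1)) ≤ q ^ (1/2 + ε) · q ^ (1/4)`.
-/

open Polynomial

namespace Polynomial

variable {R : Type*} [CommRing R]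

noncomputable def frobeniusReindex (P : R[X]) (c : ℕ) (e : ℕ → ℕ) : R[X] :=
  ∑ i ∈ P.support, monomial (e i) (P.coeff i ^ c)

variable {P : R[X]} {c : ℕ} {e : ℕ → ℕ}

theorem coeff_frobeniusReindex_apply (he : Set.InjOn e P.support) {i : ℕ} (hi : i ∈ P.support) :
    (P.frobeniusReindex c e).coeff (e i) = P.coeff i ^ c := by
  rw [frobeniusReindex, finsetSum_coeff, Finset.sum_eq_single_of_mem i hi]
  · rw [coeff_monomial_same]
  · intro j hj hji
    rw [coeff_monomial, if_neg fun h => hji (he hj hi h)]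

theorem frobeniusReindex_ne_zero [NoZeroDivisors R] (he : Set.InjOn e P.support) (hP : P ≠ 0) :
    P.frobeniusReindex c e ≠ 0 := by
  have hd := natDegree_mem_support_of_nonzero hP
  intro h
  have := coeff_frobeniusReindex_apply (c := c) he hd
  rw [h, coeff_zero] at this
  exact pow_ne_zero c (mem_support_iff.mp hd) this.symm

theorem natDegree_frobeniusReindex_le {M : ℕ} (h : ∀ i ∈ P.support, e i ≤ M) :
    (P.frobeniusReindex c e).natDegree ≤ M :=
  natDegree_sum_le_of_forall_le _ _ fun i hi => (natDegree_monomial_le _).trans (h i hi)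

theorem eval_frobeniusReindex (p n : ℕ) [ExpChar R p] {x : R}
    (he : ∀ i ∈ P.support, x ^ e i = x ^ (i * p ^ n)) :
    (P.frobeniusReindex (p ^ n) e).eval x = P.eval x ^ p ^ n := by
  rw [frobeniusReindex, eval_finsetSum, eval_eq_sum, sum_def, sum_pow_char_pow]
  refine Finset.sum_congr rfl fun i hi => ?_
  rw [eval_monomial, he i hi, mul_pow, pow_mul]

theorem ncard_setOf_eval_eq_zero_le [IsDomain R] {Q : R[X]} (hQ : Q ≠ 0)
    (h : ∀ x, P.eval x = 0 → Q.eval x = 0) : {x | P.eval x = 0}.ncard ≤ Q.natDegree := by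
  classical
  have hsub : {x | P.eval x = 0} ⊆ Q.roots.toFinset := fun x hx => by
    simpa [mem_roots hQ] using h x hx
  calc {x | P.eval x = 0}.ncard ≤ (Q.roots.toFinset : Set R).ncard :=
        Set.ncard_le_ncard hsub (Finset.finite_toSet _)
    _ = Q.roots.toFinset.card := Set.ncard_coe_finset _
    _ ≤ Q.natDegree := card_le_degree_of_subset_roots (Multiset.dedup_subset _)

end Polynomial

def lacunaryExponent (N c q i : ℕ) : ℕ :=
  if i < N then i * c else i * c - (q - 1)

section lacunaryExponent

variable {N c q : ℕ}

theorem lacunaryExponent_injective {p : ℕ} (hp : 1 < p) (hpc : p ∣ c) (hpq : p ∣ q) (hq₀ : 0 < q)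
    (hq : q ≤ N * c) : Function.Injective (lacunaryExponent N c q) := by
  have hc : 0 < c := Nat.pos_of_mul_pos_left (hq₀.trans_le hq)
  have hlow : ∀ i < N, p ∣ lacunaryExponent N c q i := fun i hi => by
    simpa [lacunaryExponent, hi] using hpc.mul_left i
  have hhigh : ∀ i, N ≤ i → ¬ p ∣ lacunaryExponent N c q i := fun i hi hdvd => by
    have hiq : q ≤ i * c := hq.trans (Nat.mul_le_mul_right c hi)
    have hsum : lacunaryExponent N c q i + q = i * c + 1 := by
      simp only [lacunaryExponent, if_neg (not_lt.mpr hi)]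
      generalize i * c = m at hiq ⊢
      omega
    have : p ∣ i * c + 1 := hsum ▸ dvd_add hdvd hpq
    exact hp.ne' (Nat.dvd_one.mp ((Nat.dvd_add_right (hpc.mul_left i)).mp this))
  intro i j hij
  rcases lt_or_ge i N with hi | hi <;> rcases lt_or_ge j N with hj | hj
  · simp only [lacunaryExponent, if_pos hi, if_pos hj] at hij
    exact Nat.eq_of_mul_eq_mul_right hc hij
  · exact absurd (hij ▸ hlow i hi) (hhigh j hj)
  · exact absurd (hij ▸ hlow j hj) (hhigh i hi)
  · have hiq : q ≤ i * c := hq.trans (Nat.mul_le_mul_right c hi)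
    have hjq : q ≤ j * c := hq.trans (Nat.mul_le_mul_right c hj)
    simp only [lacunaryExponent, if_neg (not_lt.mpr hi), if_neg (not_lt.mpr hj)] at hij
    refine Nat.eq_of_mul_eq_mul_right hc ?_
    generalize i * c = a, j * c = b at hiq hjq hij ⊢
    omega

theorem lacunaryExponent_le {d₁ d₂ i : ℕ} (h₁ : i < N → i ≤ d₁) (h₂ : N ≤ i → i ≤ d₂) :
    lacunaryExponent N c q i ≤ max (d₁ * c) (d₂ * c - (q - 1)) := by
  unfold lacunaryExponent
  split_ifs with hi
  · exact le_max_of_le_left (Nat.mul_le_mul_right c (h₁ hi))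
  · exact le_max_of_le_right (Nat.sub_le_sub_right (Nat.mul_le_mul_right c (h₂ (not_lt.mp hi))) _)

theorem pow_lacunaryExponent {F : Type*} [Field F] [Fintype F] (hq : Fintype.card F ≤ N * c)
    (x : F) (i : ℕ) : x ^ lacunaryExponent N c (Fintype.card F) i = x ^ (i * c) := by
  unfold lacunaryExponent
  split_ifs with hi
  · rfl
  · have hiq : Fintype.card F ≤ i * c := hq.trans (Nat.mul_le_mul_right c (not_lt.mp hi))
    have hpos : 0 < Fintype.card F := Fintype.card_pos
    calc x ^ (i * c - (Fintype.card F - 1)) = x ^ (i * c - Fintype.card F) * x := by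
          rw [← pow_succ]; congr 1; omega
      _ = x ^ (i * c - Fintype.card F) * x ^ Fintype.card F := by rw [FiniteField.pow_card]
      _ = x ^ (i * c) := by rw [← pow_add, Nat.sub_add_cancel hiq]

end lacunaryExponent

theorem ncard_setOf_eval_add_eq_zero_le {F : Type*} [Field F] [Fintype F] {p : ℕ} [Fact p.Prime]
    [CharP F p] {N n : ℕ} (hn : 0 < n) (hq : Fintype.card F = N * p ^ n) {P₁ P₂ : F[X]}
    (hP : P₁ + P₂ ≠ 0) (h₁ : P₁.natDegree < N) (h₂ : ∀ i < N, P₂.coeff i = 0) :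
    {x | (P₁ + P₂).eval x = 0}.ncard ≤
      max (P₁.natDegree * p ^ n) (P₂.natDegree * p ^ n - (Fintype.card F - 1)) := by
  have hp := (Fact.out : p.Prime)
  set e := lacunaryExponent N (p ^ n) (Fintype.card F)
  have he : Function.Injective e := lacunaryExponent_injective hp.one_lt
    (dvd_pow_self p hn.ne') (hq ▸ (dvd_pow_self p hn.ne').mul_left N) Fintype.card_pos hq.le
  have hpow : ∀ (x : F) i, x ^ e i = x ^ (i * p ^ n) := pow_lacunaryExponent hq.le
  calc {x | (P₁ + P₂).eval x = 0}.ncard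
      ≤ ((P₁ + P₂).frobeniusReindex (p ^ n) e).natDegree := by
        refine ncard_setOf_eval_eq_zero_le (frobeniusReindex_ne_zero he.injOn hP) fun x hx => ?_
        rw [eval_frobeniusReindex p n fun i _ => hpow x i, hx, zero_pow (pow_ne_zero n hp.ne_zero)]
    _ ≤ _ := by
        refine natDegree_frobeniusReindex_le fun i hi =>
          lacunaryExponent_le (fun hiN => ?_) fun hiN => ?_
        · refine le_natDegree_of_ne_zero fun h => mem_support_iff.mp hi ?_
          rw [coeff_add, h, h₂ i hiN, add_zero]
        · refine le_natDegree_of_ne_zero fun h => mem_support_iff.mp hi ?_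
          rw [coeff_add, h, coeff_eq_zero_of_natDegree_lt (h₁.trans_le hiN), add_zero]

theorem rpow_half_add_lt_pow {p ε : ℝ} {K L : ℕ} (hp : 1 < p) (hKL : 3 * K ≤ 4 * L) (hK : 0 < K)
    (hε : ε < 1 / 4) : (p ^ K) ^ (1 / 2 + ε) < p ^ L := by
  rw [← Real.rpow_natCast_mul (by positivity), ← Real.rpow_natCast]
  have hKL' : (3 : ℝ) * K ≤ 4 * L := by exact_mod_cast hKL
  have hK' : (0 : ℝ) < K := by exact_mod_cast hK
  exact Real.rpow_lt_rpow_of_exponent_lt hp (by nlinarith)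

theorem pow_sub_le_rpow_quarter {p : ℝ} {K L : ℕ} (hp : 1 ≤ p) (hKL : 3 * K ≤ 4 * L) (hLK : L ≤ K) :
    p ^ (K - L) ≤ (p ^ K) ^ (1 / 4 : ℝ) := by
  rw [← Real.rpow_natCast_mul (by positivity), ← Real.rpow_natCast]
  have hKL' : (3 : ℝ) * K ≤ 4 * L := by exact_mod_cast hKL
  exact Real.rpow_le_rpow_of_exponent_le hp (by push_cast [Nat.cast_sub hLK]; linarith)

theorem cast_max_mul_le {d₁ d₂ N c : ℕ} {D : ℝ} (hc : 1 ≤ c) (h₁ : d₁ ≤ D) (h₂ : d₂ ≤ N + D - 1) :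
    ((max (d₁ * c) (d₂ * c - (N * c - 1)) : ℕ) : ℝ) ≤ D * c := by
  have hD : 0 ≤ D := (Nat.cast_nonneg _).trans h₁
  have hc' : (1 : ℝ) ≤ c := by exact_mod_cast hc
  rw [Nat.cast_max]
  refine max_le (by push_cast; gcongr) ?_
  rcases le_total (d₂ * c) (N * c - 1) with h | h
  · rw [Nat.sub_eq_zero_of_le h, Nat.cast_zero]
    positivity
  · have hNc : ((N * c : ℕ) : ℝ) ≤ ((N * c - 1 : ℕ) : ℝ) + 1 := by
      exact_mod_cast (by omega : N * c ≤ N * c - 1 + 1)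
    rw [Nat.cast_sub h]
    push_cast at hNc ⊢
    nlinarith [mul_le_mul_of_nonneg_right h₂ (by positivity : (0 : ℝ) ≤ c)]

theorem stmt_15_general (p K L : ℕ) (hp : p.Prime) (hKL : 3 * K ≤ 4 * L) (hLK : L < K)
    (ε : ℝ) (hε' : ε < 1 / 4)
    (F : Type*) [Field F] [Fintype F] (hF : Fintype.card F = p ^ K)
    (P₁ P₂ : Polynomial F) (hP : P₁ + P₂ ≠ 0)
    (h1 : (P₁.natDegree : ℝ) ≤ ((p : ℝ) ^ K) ^ ((1 : ℝ) / 2 + ε))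
    (h2 : (P₂.natDegree : ℝ) ≤ (p : ℝ) ^ L + ((p : ℝ) ^ K) ^ ((1 : ℝ) / 2 + ε) - 1)
    (hmin : ∀ i < p ^ L, P₂.coeff i = 0) :
    ({x : F | Polynomial.eval x (P₁ + P₂) = 0}.ncard : ℝ) ≤
      ((p : ℝ) ^ K) ^ ((3 : ℝ) / 4 + ε) := by
  have : Fact p.Prime := ⟨hp⟩
  have : CharP F p := charP_of_card_eq_prime_pow hF
  have hp1 : (1 : ℝ) < p := by exact_mod_cast hp.one_lt
  have hcard : Fintype.card F = p ^ L * p ^ (K - L) := by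
    rw [hF, ← pow_add, Nat.add_sub_cancel' hLK.le]
  have h₁ : P₁.natDegree < p ^ L := by
    exact_mod_cast h1.trans_lt (rpow_half_add_lt_pow hp1 hKL (by omega) hε')
  have hroots := ncard_setOf_eval_add_eq_zero_le (Nat.sub_pos_of_lt hLK) hcard hP h₁ hmin
  rw [hcard] at hroots
  calc ({x : F | (P₁ + P₂).eval x = 0}.ncard : ℝ)
      ≤ ((p : ℝ) ^ K) ^ ((1 : ℝ) / 2 + ε) * ((p ^ (K - L) : ℕ) : ℝ) :=
        (Nat.cast_le.mpr hroots).trans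
          (cast_max_mul_le (Nat.one_le_pow _ _ hp.pos) h1 (by push_cast; exact h2))
    _ ≤ ((p : ℝ) ^ K) ^ ((1 : ℝ) / 2 + ε) * ((p : ℝ) ^ K) ^ (1 / 4 : ℝ) := by
        push_cast
        gcongr
        exact pow_sub_le_rpow_quarter hp1.le hKL hLK.le
    _ = ((p : ℝ) ^ K) ^ ((3 : ℝ) / 4 + ε) := by
        rw [← Real.rpow_add (by positivity)]
        ring_nf

/-- Lacunary polynomial root bound: let `q = p^K`, `(3/4)K ≤ L < K`, `0 < ε < 1/4`,
and `P = P₁ + P₂ ∈ 𝔽_q[X]` nonzero with `deg P₁ ≤ q^{1/2+ε}`,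
`deg P₂ ≤ q^{L/K} + q^{1/2+ε} − 1 < q` (note `q^{L/K} = p^L`), and every nonzero
monomial of `P₂` of degree at least `p^L`. Then `P` has at most `q^{3/4+ε}` roots. -/
theorem stmt_15 (p K L : ℕ) (hp : p.Prime) (hKL : 3 * K ≤ 4 * L) (hLK : L < K)
    (ε : ℝ) (hε : 0 < ε) (hε' : ε < 1 / 4)
    (F : Type*) [Field F] [Fintype F] (hF : Fintype.card F = p ^ K)
    (P₁ P₂ : Polynomial F) (hP : P₁ + P₂ ≠ 0)
    (h1 : (P₁.natDegree : ℝ) ≤ ((p : ℝ) ^ K) ^ ((1 : ℝ) / 2 + ε))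
    (h2 : (P₂.natDegree : ℝ) ≤ (p : ℝ) ^ L + ((p : ℝ) ^ K) ^ ((1 : ℝ) / 2 + ε) - 1)
    (h2' : (p : ℝ) ^ L + ((p : ℝ) ^ K) ^ ((1 : ℝ) / 2 + ε) - 1 < (p : ℝ) ^ K)
    (hmin : ∀ i < p ^ L, P₂.coeff i = 0) :
    ({x : F | Polynomial.eval x (P₁ + P₂) = 0}.ncard : ℝ) ≤
      ((p : ℝ) ^ K) ^ ((3 : ℝ) / 4 + ε) :=
  stmt_15_general p K L hp hKL hLK ε hε' F hF P₁ P₂ hP h1 h2 hmin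
end

section
/- Let S be a nonabelian finite simple group, n ≥ 1, and let α be an automorphism of Sⁿ of the form α = (α₁ × ⋯ × αₙ) ∘ σ, where each αᵢ ∈ Aut(S) and σ cyclically permutes the n coordinates as the cycle (1,2,…,n). Then the number of elements of Sⁿ inverted by α is at most |S|; in particular, for each s₁ ∈ S there is at most one element (s₁,…,sₙ) of Sⁿ inverted by α with first coordinate s₁. -/
/-- Let `S` be a nonabelian finite simple group and `α = (α₁ × ⋯ × αₙ) ∘ σ` an
automorphism of `Sⁿ` with `σ` the full cycle `(1,2,…,n)` (so coordinate `i` of the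
image is `αᵢ` applied to coordinate `i − 1`). Then at most one inverted tuple has any
given first coordinate, and the number of elements of `Sⁿ` inverted by `α` is at most
`|S|`. -/
theorem stmt_16 {S : Type*} [Group S] [Finite S] (hS : IsSimpleGroup S)
    (hna : ∃ a b : S, a * b ≠ b * a) (n : ℕ) [NeZero n] (A : Fin n → (S ≃* S)) :
    (∀ x y : Fin n → S,
        (∀ i, A i (x (i - 1)) = (x i)⁻¹) → (∀ i, A i (y (i - 1)) = (y i)⁻¹) →
          x 0 = y 0 → x = y) ∧
      Nat.card {x : Fin n → S | ∀ i, A i (x (i - 1)) = (x i)⁻¹} ≤ Nat.card S := by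
  have huniq : ∀ x y : Fin n → S,
      (∀ i, A i (x (i - 1)) = (x i)⁻¹) → (∀ i, A i (y (i - 1)) = (y i)⁻¹) →
        x 0 = y 0 → x = y := by
    intro x y hx hy h0
    funext i
    have key : ∀ k : ℕ, ∀ i : Fin n, i.val = k → x i = y i := by
      intro k
      induction k with
      | zero =>
        intro i hi
        have : i = 0 := Fin.ext (by simp [hi])
        subst this; exact h0
      | succ k ih =>
        intro i hi
        have hne : i ≠ 0 := by
          intro h; subst h; simp [Fin.val_zero] at hi
        have hn2 : 1 < n := by have := i.isLt; omega
        have hv1 : (1 : Fin n).val = 1 := by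
          simp [Fin.val_one', Nat.mod_eq_of_lt hn2]
        have h1 : (i - 1).val = k := by
          rw [Fin.sub_val_of_le (by rw [Fin.le_def, hv1]; omega), hv1, hi]
          omega
        have heq : x (i - 1) = y (i - 1) := ih _ h1
        have hinv : (x i)⁻¹ = (y i)⁻¹ := by rw [← hx i, ← hy i, heq]
        exact inv_injective hinv
    exact key i.val i rfl
  refine ⟨huniq, ?_⟩
  have : Nat.card {x : Fin n → S | ∀ i, A i (x (i - 1)) = (x i)⁻¹} =
      Nat.card {x : Fin n → S // ∀ i, A i (x (i - 1)) = (x i)⁻¹} := rfl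
  rw [this]
  exact Nat.card_le_card_of_injective (fun x => x.1 0)
    (fun a b hab => Subtype.ext (huniq a.1 b.1 a.2 b.2 hab))
end
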